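/- Let a and b be operators on ℂ² satisfying ab + ba = 1, a² = 0, b² = 0, with vacua φ₀ (aφ₀ = 0) and Ψ₀ (b*Ψ₀ = 0) normalized by ⟨φ₀,Ψ₀⟩ = 1; set φ₁ := bφ₀, Ψ₁ := a*Ψ₀, N := ba, S_Ψ f := ⟨Ψ₀,f⟩Ψ₀ + ⟨Ψ₁,f⟩Ψ₁, S_Ψ^{1/2} the positive semidefinite square root of S_Ψ, and c := S_Ψ^{1/2} a S_Ψ^{-1/2} with N₀ := c*c. Then N = S_Ψ^{-1/2} N₀ S_Ψ^{1/2} and N* = S_Ψ^{1/2} N₀ S_Ψ^{-1/2}; equivalently, S_Ψ^{1/2} N = N₀ S_Ψ^{1/2} and S_Ψ^{1/2} N₀ = N* S_Ψ^{1/2}. -/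

import Mathlib

open Matrix
open scoped InnerProductSpace ComplexOrder

noncomputable section

def act (A : Matrix (Fin 2) (Fin 2) ℂ) (x : EuclideanSpace ℂ (Fin 2)) :
    EuclideanSpace ℂ (Fin 2) := WithLp.toLp 2 (A.mulVec x)

/-!
Put `Ψ₁ = a* Ψ₀`. The relations `ab + ba = 1`, `a² = 0` and `b* Ψ₀ = 0` give `b* Ψ₁ = Ψ₀` and
`a* Ψ₁ = 0`, and evaluating on `f` shows that `S_Ψ b` and `a* S_Ψ` both send `f` to `⟪Ψ₀, f⟫ Ψ₁`,
so `S_Ψ b = a* S_Ψ`. Since `b*` kills `Ψ₀ ≠ 0` and lowers `Ψ₁` to `Ψ₀`, the vectors `Ψ₀, Ψ₁`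
form a basis of `ℂ²`; hence `S_Ψ` is injective and its Hermitian square root `R` is invertible.
Then `N₀ = R⁻¹ a* R² a R⁻¹ = R⁻¹ S_Ψ b a R⁻¹ = R N R⁻¹`, and taking adjoints gives
`R N₀ = N* R`.
-/

theorem LinearIndependent.pair_of_map_eq {K M : Type*} [Field K] [AddCommGroup M] [Module K M]
    (B : M →ₗ[K] M) {x y : M} (hx : x ≠ 0) (hBx : B x = 0) (hBy : B y = x) :
    LinearIndependent K ![x, y] := by
  refine LinearIndependent.pair_iff.mpr fun s t hst => ?_
  have ht : t = 0 := by
    simpa [hBx, hBy, hx] using congrArg B hst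
  subst ht
  simpa [hx] using hst

section FrameOperator

variable {𝕜 H : Type*} [RCLike 𝕜] [NormedAddCommGroup H] [InnerProductSpace 𝕜 H]

theorem Module.Basis.injective_of_eq_sum_inner_smul {ι : Type*} [Fintype ι] (v : Module.Basis ι 𝕜 H)
    (S : H → H) (hS : ∀ f, S f = ∑ i, ⟪v i, f⟫_𝕜 • v i) : Function.Injective S := by
  intro f g hfg
  refine InnerProductSpace.ext_inner_left_basis v fun i => ?_
  have := congrArg (fun h => v.repr h i) hfg
  simpa only [hS, v.repr_sum_self] using this

variable [CompleteSpace H] {a b : H →L[𝕜] H} {Ψ₀ : H}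

theorem star_apply_star_apply_of_mul_add_mul_eq_one (hab : a * b + b * a = 1)
    (hΨ₀ : star b Ψ₀ = 0) : star b (star a Ψ₀) = Ψ₀ := by
  have h : star b * star a + star a * star b = 1 := by
    simpa only [star_add, star_mul, star_one] using congrArg star hab
  simpa [hΨ₀] using congrArg (· Ψ₀) h

theorem star_apply_star_apply_of_mul_self_eq_zero (ha2 : a * a = 0) (Ψ : H) :
    star a (star a Ψ) = 0 := by
  have h : star a * star a = 0 := by
    simpa only [star_mul, star_zero] using congrArg star ha2
  simpa using congrArg (· Ψ) h

theorem mul_eq_star_mul_of_eq_inner_smul_add_inner_smul {S : H →L[𝕜] H} {Ψ₁ : H}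
    (hS : ∀ f, S f = ⟪Ψ₀, f⟫_𝕜 • Ψ₀ + ⟪Ψ₁, f⟫_𝕜 • Ψ₁)
    (hb₀ : star b Ψ₀ = 0) (hb₁ : star b Ψ₁ = Ψ₀) (ha₀ : star a Ψ₀ = Ψ₁) (ha₁ : star a Ψ₁ = 0) :
    S * b = star a * S := by
  ext f
  have hadj : ∀ (T : H →L[𝕜] H) x, ⟪x, T f⟫_𝕜 = ⟪star T x, f⟫_𝕜 := fun T x => by
    rw [ContinuousLinearMap.star_eq_adjoint, ContinuousLinearMap.adjoint_inner_left]
  simp [hS, hadj b, hb₀, hb₁, ha₀, ha₁]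

end FrameOperator

section Similarity

variable {n α : Type*} [Fintype n] [DecidableEq n] [CommRing α] [StarRing α]
  {a b R : Matrix n n α}

theorem mul_mul_eq_conjTranspose_mul_mul (hR : R.IsHermitian) (hRu : IsUnit R.det)
    (h : R * R * b = aᴴ * (R * R)) :
    R * (b * a) = (R * a * R⁻¹)ᴴ * (R * a * R⁻¹) * R := by
  have hRinv : R⁻¹ᴴ = R⁻¹ := by rw [conjTranspose_nonsing_inv, hR.eq]
  calc R * (b * a) = R⁻¹ * (R * R * b) * a := by
        rw [Matrix.mul_assoc R R b, Matrix.nonsing_inv_mul_cancel_left _ _ hRu, Matrix.mul_assoc]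
    _ = R⁻¹ * aᴴ * R * (R * a * (R⁻¹ * R)) := by
        rw [h, Matrix.nonsing_inv_mul _ hRu]; simp only [Matrix.mul_assoc, Matrix.mul_one]
    _ = (R * a * R⁻¹)ᴴ * (R * a * R⁻¹) * R := by
        simp only [conjTranspose_mul, hRinv, hR.eq, Matrix.mul_assoc]

theorem mul_conjTranspose_mul_eq_mul (hR : R.IsHermitian) (hRu : IsUnit R.det)
    (h : R * R * b = aᴴ * (R * R)) :
    R * ((R * a * R⁻¹)ᴴ * (R * a * R⁻¹)) = (b * a)ᴴ * R := by
  have := congrArg conjTranspose (mul_mul_eq_conjTranspose_mul_mul hR hRu h)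
  rw [conjTranspose_mul, conjTranspose_mul, conjTranspose_mul, hR.eq,
    (isHermitian_conjTranspose_mul_self _).eq] at this
  rw [← this, conjTranspose_mul]

end Similarity

theorem Matrix.isUnit_of_injective_toEuclideanCLM {𝕜 n : Type*} [RCLike 𝕜] [Fintype n]
    [DecidableEq n] {A : Matrix n n 𝕜} (h : Function.Injective (toEuclideanCLM (𝕜 := 𝕜) A)) :
    IsUnit A :=
  mulVec_injective_iff_isUnit.mp fun v w hvw =>
    WithLp.toLp_injective 2 (h (by simp only [toEuclideanCLM_toLp, hvw]))

theorem act_eq_toEuclideanCLM (A : Matrix (Fin 2) (Fin 2) ℂ) (x : EuclideanSpace ℂ (Fin 2)) :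
    act A x = toEuclideanCLM (n := Fin 2) (𝕜 := ℂ) A x := rfl

theorem act_conjTranspose (A : Matrix (Fin 2) (Fin 2) ℂ) (x : EuclideanSpace ℂ (Fin 2)) :
    act Aᴴ x = star (toEuclideanCLM (n := Fin 2) (𝕜 := ℂ) A) x := by
  rw [act_eq_toEuclideanCLM, ← map_star]; rfl

theorem stmt12_general (a b SΨ R : Matrix (Fin 2) (Fin 2) ℂ)
    (hab : a * b + b * a = 1) (ha2 : a * a = 0)
    (φ₀ Ψ₀ : EuclideanSpace ℂ (Fin 2))
    (hvacΨ : act bᴴ Ψ₀ = 0)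
    (hnorm : ⟪φ₀, Ψ₀⟫_ℂ = 1)
    (hSΨ : ∀ f, act SΨ f = ⟪Ψ₀, f⟫_ℂ • Ψ₀ + ⟪act aᴴ Ψ₀, f⟫_ℂ • act aᴴ Ψ₀)
    (hR : R.PosSemidef) (hR2 : R * R = SΨ) :
    b * a = R⁻¹ * ((R * a * R⁻¹)ᴴ * (R * a * R⁻¹)) * R ∧
    (b * a)ᴴ = R * ((R * a * R⁻¹)ᴴ * (R * a * R⁻¹)) * R⁻¹ ∧
    R * (b * a) = ((R * a * R⁻¹)ᴴ * (R * a * R⁻¹)) * R ∧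
    R * ((R * a * R⁻¹)ᴴ * (R * a * R⁻¹)) = (b * a)ᴴ * R := by
  simp only [act_conjTranspose] at hvacΨ hSΨ
  simp only [act_eq_toEuclideanCLM] at hSΨ
  set T := toEuclideanCLM (n := Fin 2) (𝕜 := ℂ)
  set Ψ₁ := star (T a) Ψ₀ with hΨ₁
  have hbΨ₁ : star (T b) Ψ₁ = Ψ₀ :=
    star_apply_star_apply_of_mul_add_mul_eq_one (by simpa using congrArg T hab) hvacΨ
  have haΨ₁ : star (T a) Ψ₁ = 0 :=
    star_apply_star_apply_of_mul_self_eq_zero (by simpa using congrArg T ha2) Ψ₀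
  have hintertwine : SΨ * b = aᴴ * SΨ := EquivLike.injective T <| by
    rw [map_mul T, map_mul T, ← star_eq_conjTranspose, map_star T]
    exact mul_eq_star_mul_of_eq_inner_smul_add_inner_smul hSΨ hvacΨ hbΨ₁ hΨ₁.symm haΨ₁
  have hΨ₀ : Ψ₀ ≠ 0 := by rintro rfl; simp at hnorm
  have hli : LinearIndependent ℂ ![Ψ₀, Ψ₁] :=
    .pair_of_map_eq (star (T b)).toLinearMap hΨ₀ hvacΨ hbΨ₁
  have hSinj : Function.Injective (T SΨ) :=
    (basisOfLinearIndependentOfCardEqFinrank hli (by simp)).injective_of_eq_sum_inner_smul _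
      (by simp [Fin.sum_univ_two, hSΨ])
  have hRu : IsUnit R.det := by
    rw [← isUnit_iff_isUnit_det]
    exact isUnit_of_mul_isUnit_left (hR2 ▸ isUnit_of_injective_toEuclideanCLM hSinj)
  have h : R * R * b = aᴴ * (R * R) := hR2 ▸ hintertwine
  have hN := mul_mul_eq_conjTranspose_mul_mul hR.1 hRu h
  have hN₀ := mul_conjTranspose_mul_eq_mul hR.1 hRu h
  exact ⟨by rw [Matrix.mul_assoc, ← hN, nonsing_inv_mul_cancel_left _ _ hRu],
    by rw [hN₀, mul_nonsing_inv_cancel_right _ _ hRu], hN, hN₀⟩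

/-- With `R = S_Ψ^{1/2}`, `c = R a R⁻¹` and `N₀ = c* c`, one has
`N = R⁻¹ N₀ R`, `N* = R N₀ R⁻¹`; equivalently `R N = N₀ R` and
`R N₀ = N* R`, where `N = b a`. -/
theorem stmt12 (a b SΨ R : Matrix (Fin 2) (Fin 2) ℂ)
    (hab : a * b + b * a = 1) (ha2 : a * a = 0) (hb2 : b * b = 0)
    (φ₀ Ψ₀ : EuclideanSpace ℂ (Fin 2))
    (hvacφ : act a φ₀ = 0) (hvacΨ : act bᴴ Ψ₀ = 0)
    (hnorm : ⟪φ₀, Ψ₀⟫_ℂ = 1)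
    (hSΨ : ∀ f, act SΨ f = ⟪Ψ₀, f⟫_ℂ • Ψ₀ + ⟪act aᴴ Ψ₀, f⟫_ℂ • act aᴴ Ψ₀)
    (hR : R.PosSemidef) (hR2 : R * R = SΨ) :
    b * a = R⁻¹ * ((R * a * R⁻¹)ᴴ * (R * a * R⁻¹)) * R ∧
    (b * a)ᴴ = R * ((R * a * R⁻¹)ᴴ * (R * a * R⁻¹)) * R⁻¹ ∧
    R * (b * a) = ((R * a * R⁻¹)ᴴ * (R * a * R⁻¹)) * R ∧
    R * ((R * a * R⁻¹)ᴴ * (R * a * R⁻¹)) = (b * a)ᴴ * R :=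
  stmt12_general a b SΨ R hab ha2 φ₀ Ψ₀ hvacΨ hnorm hSΨ hR hR2
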